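/- Let Z be a metric space and T : Lip_bs(Z) → ℝ a linear functional such that ‖T‖ (defined from the masses M_V(T)) is a Borel outer measure finite on bounded sets. Then for every f ∈ Lip_bs(Z) with f ≥ 0, |T(f)| ≤ ∫_Z f d‖T‖. (Sketch: s ↦ T(min{f,s}) is Lipschitz with |d/ds T(f_s)| ≤ ‖T‖({f > s}‾) a.e., and integrate the layer-cake formula.) -/

import Mathlib

open Metric Filter MeasureTheory ENNReal Bornology

/-- Bounded-support Lipschitz real functions. -/
def LipBS {Z : Type*} [MetricSpace Z] (f : Z → ℝ) : Prop :=
  (∃ K : NNReal, LipschitzWith K f) ∧ IsBounded (tsupport f)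

/-- The mass of a `0`-dimensional functional in a set `V`. -/
noncomputable def mass0 {Z : Type*} [MetricSpace Z] (T : (Z → ℝ) → ℝ) (V : Set Z) : ℝ≥0∞ :=
  ⨆ f : {g : Z → ℝ // LipBS g ∧ tsupport g ⊆ V ∧ ∀ z, |g z| ≤ 1},
    ENNReal.ofReal (T f)

/-- The set function `‖T‖`. -/
noncomputable def normT0 {Z : Type*} [MetricSpace Z] (T : (Z → ℝ) → ℝ) (A : Set Z) : ℝ≥0∞ :=
  ⨅ (V : Set Z) (_ : IsOpen V ∧ A ⊆ V), mass0 T V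


/-!
Slice `f ≥ 0` at the levels `iδ`: `f = ∑ᵢ (min f ((i+1)δ) - min f (iδ))`. The `i`-th slice takes
values in `[0, δ]` and is supported in the closed set `tsupport f ∩ {f ≥ iδ}`, so by the definition
of `‖T‖` it contributes at most `δ ‖T‖(tsupport f ∩ {f ≥ iδ})` to `|T f|`. Since
`δ · 1_{f ≥ (i+1)δ}` lies below the `i`-th slice, summing gives
`|T f| ≤ ∫ f d‖T‖ + δ ‖T‖(tsupport f)`; let `δ → 0`.
-/

open Function Set Finset Topology

section LipBS

variable {Z : Type*} [MetricSpace Z] {f g : Z → ℝ}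

lemma lipBS_zero : LipBS (0 : Z → ℝ) :=
  ⟨⟨0, LipschitzWith.const 0⟩, by simp⟩

lemma LipBS.continuous (hf : LipBS f) : Continuous f :=
  let ⟨_, hK⟩ := hf.1; hK.continuous

lemma LipBS.const_smul (hf : LipBS f) (c : ℝ) : LipBS (c • f) := by
  obtain ⟨⟨K, hK⟩, hfb⟩ := hf
  exact ⟨⟨‖c‖₊ * K, (lipschitzWith_smul c).comp hK⟩,
    hfb.subset (tsupport_smul_subset_right (fun _ => c) f)⟩

lemma LipBS.sub (hf : LipBS f) (hg : LipBS g) : LipBS (f - g) := by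
  obtain ⟨⟨K, hK⟩, hfb⟩ := hf
  obtain ⟨⟨L, hL⟩, hgb⟩ := hg
  exact ⟨⟨K + L, hK.sub hL⟩, (hfb.union hgb).subset (tsupport_sub f g)⟩

lemma LipBS.min_const (hf : LipBS f) {s : ℝ} (hs : 0 ≤ s) : LipBS fun z => min (f z) s := by
  obtain ⟨⟨K, hK⟩, hfb⟩ := hf
  refine ⟨⟨K, hK.min_const s⟩, hfb.subset (closure_mono fun z hz h0 => hz ?_)⟩
  simp [h0, hs]

lemma LipBS.exists_le (hf : LipBS f) : ∃ M, ∀ z, f z ≤ M := by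
  obtain ⟨⟨K, hK⟩, hfb⟩ := hf
  obtain ⟨M, hM⟩ := (hK.isBounded_image hfb).bddAbove
  refine ⟨max M 0, fun z => ?_⟩
  by_cases hz : z ∈ tsupport f
  · exact (hM (mem_image_of_mem f hz)).trans (le_max_left _ _)
  · rw [image_eq_zero_of_notMem_tsupport hz]
    exact le_max_right _ _

end LipBS

section Truncation

lemma min_sub_min_nonneg (x : ℝ) {s t : ℝ} (hst : s ≤ t) : 0 ≤ min x t - min x s :=
  sub_nonneg.2 (min_le_min_left x hst)

lemma min_sub_min_le (x : ℝ) {s t : ℝ} (hst : s ≤ t) : min x t - min x s ≤ t - s := by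
  simp only [min_def]
  split_ifs <;> linarith

lemma tsupport_min_sub_min_subset {X : Type*} [TopologicalSpace X] {f : X → ℝ}
    (hf : Continuous f) {s t : ℝ} (hs : 0 ≤ s) (hst : s ≤ t) :
    tsupport (fun z => min (f z) t - min (f z) s) ⊆ tsupport f ∩ {z | s ≤ f z} := by
  refine closure_minimal (fun z hz => ⟨subset_tsupport _ fun h0 => hz ?_, ?_⟩)
    ((isClosed_tsupport f).inter (isClosed_le continuous_const hf))
  · simp [h0, hs, hs.trans hst]
  · by_contra h
    replace h : f z < s := not_le.1 h
    apply hz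
    simp [min_eq_left h.le, min_eq_left (h.le.trans hst)]

lemma sum_mul_measure_le_lintegral {X : Type*} [MeasurableSpace X] (μ : Measure X)
    {f : X → ℝ} (hf : Measurable f) (hf0 : ∀ x, 0 ≤ f x) {δ : ℝ} (hδ : 0 ≤ δ) (n : ℕ) :
    ∑ i ∈ range n, ENNReal.ofReal δ * μ {x | (i + 1 : ℕ) * δ ≤ f x} ≤
      ∫⁻ x, ENNReal.ofReal (f x) ∂μ := by
  have hS : ∀ i : ℕ, MeasurableSet {x | (i + 1 : ℕ) * δ ≤ f x} :=
    fun i => measurableSet_le measurable_const hf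
  have hlevel : ∀ i : ℕ, (i : ℝ) * δ ≤ (i + 1 : ℕ) * δ := fun i => by gcongr; simp
  simp_rw [← lintegral_indicator_const (hS _)]
  rw [← lintegral_finsetSum _ fun i _ => measurable_const.indicator (hS i)]
  refine lintegral_mono fun x => ?_
  calc ∑ i ∈ range n, {x | (i + 1 : ℕ) * δ ≤ f x}.indicator (fun _ => ENNReal.ofReal δ) x
      ≤ ∑ i ∈ range n, ENNReal.ofReal (min (f x) ((i + 1 : ℕ) * δ) - min (f x) (i * δ)) := by
        refine sum_le_sum fun i _ => ?_
        by_cases hx : x ∈ {x | (i + 1 : ℕ) * δ ≤ f x}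
        · rw [indicator_of_mem hx, min_eq_right hx, min_eq_right ((hlevel i).trans hx)]
          refine ENNReal.ofReal_le_ofReal (le_of_eq ?_)
          push_cast
          ring
        · rw [indicator_of_notMem hx]
          exact zero_le
    _ = ENNReal.ofReal (min (f x) (n * δ)) := by
        rw [← ENNReal.ofReal_sum_of_nonneg fun i _ => min_sub_min_nonneg _ (hlevel i),
          sum_range_sub (fun i : ℕ => min (f x) (i * δ))]
        simp [hf0 x]
    _ ≤ ENNReal.ofReal (f x) := ENNReal.ofReal_le_ofReal (min_le_left _ _)

end Truncation

section Functional

variable {Z : Type*} [MetricSpace Z] {T : (Z → ℝ) → ℝ}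

lemma map_sub_of_additive (hadd : ∀ f g : Z → ℝ, LipBS f → LipBS g → T (f + g) = T f + T g)
    {f g : Z → ℝ} (hf : LipBS f) (hg : LipBS g) : T (f - g) = T f - T g := by
  have := hadd g (f - g) hg (hf.sub hg)
  rw [add_sub_cancel] at this
  linarith

lemma abs_le_mass0 (hsmul : ∀ (c : ℝ) (f : Z → ℝ), LipBS f → T (c • f) = c * T f)
    {g : Z → ℝ} (hg : LipBS g) {V : Set Z} (hgV : tsupport g ⊆ V) (hg1 : ∀ z, |g z| ≤ 1) :
    ENNReal.ofReal |T g| ≤ mass0 T V := by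
  have le_mass0 : ∀ h : Z → ℝ, LipBS h → tsupport h ⊆ V → (∀ z, |h z| ≤ 1) →
      ENNReal.ofReal (T h) ≤ mass0 T V := fun h h₁ h₂ h₃ =>
    le_iSup (fun f : {g : Z → ℝ // LipBS g ∧ tsupport g ⊆ V ∧ ∀ z, |g z| ≤ 1} =>
      ENNReal.ofReal (T f)) ⟨h, h₁, h₂, h₃⟩
  rcases abs_cases (T g) with ⟨hT, -⟩ | ⟨hT, -⟩
  · rw [hT]
    exact le_mass0 g hg hgV hg1
  · have hneg : T (-g) = -T g := by simpa using hsmul (-1) g hg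
    rw [hT, ← hneg]
    exact le_mass0 (-g) (by simpa using hg.const_smul (-1)) (by rwa [tsupport_neg])
      (by simpa using hg1)

lemma abs_le_normT0 (hsmul : ∀ (c : ℝ) (f : Z → ℝ), LipBS f → T (c • f) = c * T f)
    {g : Z → ℝ} (hg : LipBS g) {A : Set Z} (hgA : tsupport g ⊆ A) (hg1 : ∀ z, |g z| ≤ 1) :
    ENNReal.ofReal |T g| ≤ normT0 T A :=
  le_iInf₂ fun _ hV => abs_le_mass0 hsmul hg (hgA.trans hV.2) hg1

lemma abs_le_mul_normT0 (hsmul : ∀ (c : ℝ) (f : Z → ℝ), LipBS f → T (c • f) = c * T f)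
    {g : Z → ℝ} (hg : LipBS g) {A : Set Z} (hgA : tsupport g ⊆ A)
    {δ : ℝ} (hδ : 0 < δ) (hgδ : ∀ z, |g z| ≤ δ) :
    ENNReal.ofReal |T g| ≤ ENNReal.ofReal δ * normT0 T A := by
  have hscaled := abs_le_normT0 hsmul (hg.const_smul δ⁻¹)
    ((tsupport_smul_subset_right (fun _ => δ⁻¹) g).trans hgA) fun z => by
      simpa [abs_mul, abs_of_pos hδ, inv_mul_le_iff₀ hδ] using hgδ z
  have hT : |T g| = δ * |T (δ⁻¹ • g)| := by
    rw [hsmul _ _ hg, abs_mul, abs_inv, abs_of_pos hδ, mul_inv_cancel_left₀ hδ.ne']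
  rw [hT, ENNReal.ofReal_mul hδ.le]
  gcongr

theorem ofReal_abs_le_lintegral_add [MeasurableSpace Z] [OpensMeasurableSpace Z]
    (hadd : ∀ f g : Z → ℝ, LipBS f → LipBS g → T (f + g) = T f + T g)
    (hsmul : ∀ (c : ℝ) (f : Z → ℝ), LipBS f → T (c • f) = c * T f)
    (μ : Measure Z) (hμ : ∀ s : Set Z, IsClosed s → μ s = normT0 T s)
    {f : Z → ℝ} (hf : LipBS f) (hf0 : ∀ z, 0 ≤ f z) {δ : ℝ} (hδ : 0 < δ) :
    ENNReal.ofReal |T f| ≤ ∫⁻ z, ENNReal.ofReal (f z) ∂μ + ENNReal.ofReal δ * μ (tsupport f) := by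
  obtain ⟨M, hM⟩ := hf.exists_le
  obtain ⟨n, hn⟩ := exists_nat_ge (M / δ)
  set F : ℕ → Z → ℝ := fun i z => min (f z) (i * δ)
  set A : ℕ → Set Z := fun i => tsupport f ∩ {z | i * δ ≤ f z}
  have hlevel : ∀ i : ℕ, (i : ℝ) * δ ≤ (i + 1 : ℕ) * δ := fun i => by gcongr; simp
  have hF : ∀ i, LipBS (F i) := fun i => hf.min_const (by positivity)
  have hF_zero : F 0 = 0 := funext fun z => by simp [F, hf0 z]
  have hF_top : F (n + 1) = f := funext fun z => min_eq_left <| by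
    have := (div_le_iff₀ hδ).1 hn
    push_cast
    nlinarith [hM z]
  have hT_sum : T f = ∑ i ∈ range (n + 1), T (F (i + 1) - F i) := by
    rw [sum_congr rfl fun i _ => map_sub_of_additive hadd (hF (i + 1)) (hF i),
      sum_range_sub (fun i => T (F i)), hF_top, hF_zero, ← sub_self (0 : Z → ℝ),
      map_sub_of_additive hadd lipBS_zero lipBS_zero, sub_self, sub_zero]
  have hT_step : ∀ i, ENNReal.ofReal |T (F (i + 1) - F i)| ≤ ENNReal.ofReal δ * μ (A i) := by
    intro i
    rw [hμ _ ((isClosed_tsupport f).inter (isClosed_le continuous_const hf.continuous))]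
    refine abs_le_mul_normT0 hsmul ((hF _).sub (hF i))
      (tsupport_min_sub_min_subset hf.continuous (by positivity) (hlevel i)) hδ fun z => ?_
    change |min (f z) _ - min (f z) _| ≤ δ
    rw [abs_of_nonneg (min_sub_min_nonneg _ (hlevel i))]
    refine (min_sub_min_le _ (hlevel i)).trans (le_of_eq ?_)
    push_cast
    ring
  calc ENNReal.ofReal |T f|
      ≤ ∑ i ∈ range (n + 1), ENNReal.ofReal |T (F (i + 1) - F i)| := by
        rw [hT_sum, ← ENNReal.ofReal_sum_of_nonneg fun _ _ => abs_nonneg _]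
        exact ENNReal.ofReal_le_ofReal (abs_sum_le_sum_abs _ _)
    _ ≤ ∑ i ∈ range (n + 1), ENNReal.ofReal δ * μ (A i) := sum_le_sum fun i _ => hT_step i
    _ = ∑ i ∈ range n, ENNReal.ofReal δ * μ (A (i + 1)) + ENNReal.ofReal δ * μ (A 0) :=
        sum_range_succ' _ _
    _ ≤ ∑ i ∈ range n, ENNReal.ofReal δ * μ {z | (i + 1 : ℕ) * δ ≤ f z} +
          ENNReal.ofReal δ * μ (tsupport f) := by
        gcongr
        · exact inter_subset_right
        · exact inter_subset_left
    _ ≤ ∫⁻ z, ENNReal.ofReal (f z) ∂μ + ENNReal.ofReal δ * μ (tsupport f) := by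
        gcongr
        exact sum_mul_measure_le_lintegral μ hf.continuous.measurable hf0 hδ.le n

end Functional

lemma ENNReal.le_of_forall_pos_le_add_ofReal_mul {a b c : ℝ≥0∞} (hc : c ≠ ∞)
    (h : ∀ δ : ℝ, 0 < δ → a ≤ b + ENNReal.ofReal δ * c) : a ≤ b := by
  have hδ : Tendsto (fun δ : ℝ => ENNReal.ofReal δ) (𝓝[>] 0) (𝓝 0) := by
    simpa using (ENNReal.tendsto_ofReal (tendsto_id (x := 𝓝 (0 : ℝ)))).mono_left nhdsWithin_le_nhds
  have hlim : Tendsto (fun δ : ℝ => b + ENNReal.ofReal δ * c) (𝓝[>] 0) (𝓝 b) := by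
    simpa using (tendsto_const_nhds (x := b)).add (ENNReal.Tendsto.mul_const hδ (Or.inr hc))
  exact ge_of_tendsto hlim (eventually_nhdsWithin_of_forall h)

/-- for a linear functional `T` on `Lip_bs(Z)` whose mass `‖T‖` is a Borel
outer measure finite on bounded sets, one has `|T(f)| ≤ ∫_Z f d‖T‖` for `f ≥ 0`. -/
theorem zero_dim_mass_bound {Z : Type*} [MetricSpace Z] [MeasurableSpace Z] [BorelSpace Z]
    (T : (Z → ℝ) → ℝ)
    (hadd : ∀ f g : Z → ℝ, LipBS f → LipBS g → T (f + g) = T f + T g)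
    (hsmul : ∀ (c : ℝ) (f : Z → ℝ), LipBS f → T (c • f) = c * T f)
    (μ : Measure Z) (hμ : ∀ s : Set Z, MeasurableSet s → μ s = normT0 T s)
    (hfin : ∀ s : Set Z, IsBounded s → μ s < ⊤)
    (f : Z → ℝ) (hf : LipBS f) (hf0 : ∀ z, 0 ≤ f z) :
    ENNReal.ofReal |T f| ≤ ∫⁻ z, ENNReal.ofReal (f z) ∂μ := by
  refine ENNReal.le_of_forall_pos_le_add_ofReal_mul (hfin _ hf.2).ne fun δ hδ => ?_
  exact ofReal_abs_le_lintegral_add hadd hsmul μ (fun s hs => hμ s hs.measurableSet) hf hf0 hδ
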